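/- arXiv:2412.12051 — 2 statements merged into one kernel-verified Lean document; each statement's English description precedes it below -/
import Mathlib

section
/- Let 0 < s < 1 and let f be a finite linear combination of Haar functions. Then f = (2^s − 1) · T_s(D^s f), where T_s g = Σ_{I∈𝒟} |I|^s ⟨g⟩_I 1_I and D^s f = Σ_{I∈𝒟} |I|^{-s} (f, h_I) h_I. -/
open MeasureTheory Filter
open scoped ENNReal Classical Topology

noncomputable section

/-- The standard dyadic interval `[k·2^n, (k+1)·2^n)`. -/
def dyadic (n k : ℤ) : Set ℝ := Set.Ico ((k : ℝ) * 2 ^ n) (((k : ℝ) + 1) * 2 ^ n)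

/-- The Haar function associated with `dyadic n k`:
`h_I = |I|^{-1/2} (1_{I_+} - 1_{I_-})`. -/
def haar (n k : ℤ) : ℝ → ℝ := fun x =>
  (2 : ℝ) ^ (-(n : ℝ) / 2) *
    ((dyadic (n - 1) (2 * k + 1)).indicator 1 x - (dyadic (n - 1) (2 * k)).indicator 1 x)

/-- The constant value of `haar n k` on the dyadic subinterval `dyadic m j`
(its value at the left endpoint of that subinterval). -/
def haarVal (n k m j : ℤ) : ℝ := haar n k ((j : ℝ) * 2 ^ m)

/-- Haar coefficient `(f, h_I)`. -/
def innH (f : ℝ → ℝ) (n k : ℤ) : ℝ := ∫ x, f x * haar n k x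

/-- Dyadic average `⟨f⟩_I = |I|⁻¹ ∫_I f`. -/
def avg (f : ℝ → ℝ) (n k : ℤ) : ℝ := (2 : ℝ) ^ (-n) * ∫ x in dyadic n k, f x

/-- The linear span of the Haar functions. -/
def haarSpan : Submodule ℝ (ℝ → ℝ) :=
  Submodule.span ℝ (Set.range fun p : ℤ × ℤ => haar p.1 p.2)

end

/-- The dyadic fractional integral of order s. -/
noncomputable def Ts (s : ℝ) (g : ℝ → ℝ) : ℝ → ℝ := fun x =>
  ∑' p : ℤ × ℤ, (2 : ℝ) ^ ((p.1 : ℝ) * s) * avg g p.1 p.2 * (dyadic p.1 p.2).indicator 1 x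

/-- The dyadic fractional derivative of order s. -/
noncomputable def Ds (s : ℝ) (f : ℝ → ℝ) : ℝ → ℝ := fun x =>
  ∑' p : ℤ × ℤ, (2 : ℝ) ^ (-(p.1 : ℝ) * s) * innH f p.1 p.2 * haar p.1 p.2 x

/-!
Orthonormality of the Haar system gives `D^s h_I = |I|^{-s} h_I`. For fixed `x`, the average
`⟨h_I⟩_J` vanishes unless `J ⊊ I`, in which case `h_I` is constant on `J`; so
`T_s h_I (x) = h_I(x) ∑_{x ∈ J ⊊ I} |J|^s`, a geometric series with sum `|I|^s h_I(x) / (2^s - 1)`.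
Linearity finishes the proof.
-/

section Dyadic

variable {n m k j : ℤ} {x : ℝ}

lemma mem_dyadic_iff_floor : x ∈ dyadic n k ↔ ⌊x / 2 ^ n⌋ = k := by
  rw [dyadic, Set.mem_Ico, Int.floor_eq_iff, le_div_iff₀ (zpow_pos two_pos n),
    div_lt_iff₀ (zpow_pos two_pos n)]

lemma left_mem_dyadic (n k : ℤ) : (k : ℝ) * 2 ^ n ∈ dyadic n k := by
  rw [mem_dyadic_iff_floor, mul_div_cancel_right₀ _ (zpow_ne_zero n two_ne_zero), Int.floor_intCast]

lemma measurableSet_dyadic (n k : ℤ) : MeasurableSet (dyadic n k) := measurableSet_Ico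

lemma volume_real_dyadic (n k : ℤ) : volume.real (dyadic n k) = 2 ^ n := by
  rw [dyadic, Real.volume_real_Ico_of_le (by nlinarith [zpow_pos (two_pos : (0 : ℝ) < 2) n])]
  ring

lemma floor_div_two_zpow_of_le (h : n ≤ m) (x : ℝ) :
    ⌊x / 2 ^ m⌋ = ⌊x / 2 ^ n⌋ / 2 ^ (m - n).toNat := by
  have h2 : (2 : ℝ) ^ m = 2 ^ n * ((2 ^ (m - n).toNat : ℕ) : ℝ) := by
    rw [Nat.cast_pow, Nat.cast_ofNat, ← zpow_natCast, ← zpow_add₀ two_ne_zero]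
    congr 1
    omega
  rw [h2, ← div_div, Int.floor_div_natCast]
  push_cast
  rfl

lemma floor_div_two_zpow_eq_div_two (n : ℤ) (x : ℝ) : ⌊x / 2 ^ n⌋ = ⌊x / 2 ^ (n - 1)⌋ / 2 := by
  rw [floor_div_two_zpow_of_le (by omega : n - 1 ≤ n), show (n - (n - 1)).toNat = 1 by omega,
    pow_one]

lemma indicator_dyadic_eq_left (h : n ≤ m) (hx : x ∈ dyadic n k) :
    (dyadic m j).indicator 1 x = (dyadic m j).indicator (1 : ℝ → ℝ) ((k : ℝ) * 2 ^ n) := by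
  have hfloor : ∀ y ∈ dyadic n k, ⌊y / 2 ^ m⌋ = k / 2 ^ (m - n).toNat := fun y hy => by
    rw [floor_div_two_zpow_of_le h, mem_dyadic_iff_floor.1 hy]
  simp only [Set.indicator_apply, mem_dyadic_iff_floor, hfloor x hx, hfloor _ (left_mem_dyadic n k),
    Pi.one_apply]

lemma disjoint_dyadic (h : k ≠ j) : Disjoint (dyadic n k) (dyadic n j) :=
  Set.disjoint_left.2 fun _ hk hj =>
    h ((mem_dyadic_iff_floor.1 hk).symm.trans (mem_dyadic_iff_floor.1 hj))

lemma integrable_indicator_dyadic (n k : ℤ) : Integrable ((dyadic n k).indicator (1 : ℝ → ℝ)) :=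
  (integrable_indicator_iff (measurableSet_dyadic n k)).2 <|
    integrableOn_const (by simp [dyadic, Real.volume_Ico])

end Dyadic

section Haar

variable {n k N K : ℤ} {x : ℝ}

lemma haar_apply (n k : ℤ) (x : ℝ) :
    haar n k x = 2 ^ (-(n : ℝ) / 2) *
      ((if ⌊x / 2 ^ (n - 1)⌋ = 2 * k + 1 then 1 else 0) -
        if ⌊x / 2 ^ (n - 1)⌋ = 2 * k then 1 else 0) := by
  simp only [haar, Set.indicator_apply, mem_dyadic_iff_floor, Pi.one_apply]

lemma haar_eq_zero_of_notMem (hx : x ∉ dyadic n k) : haar n k x = 0 := by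
  rw [mem_dyadic_iff_floor, floor_div_two_zpow_eq_div_two] at hx
  rw [haar_apply, if_neg (by omega), if_neg (by omega), sub_self, mul_zero]

lemma abs_haar_le (n k : ℤ) (x : ℝ) : |haar n k x| ≤ 2 ^ (-(n : ℝ) / 2) := by
  have h0 : (0 : ℝ) ≤ 2 ^ (-(n : ℝ) / 2) := Real.rpow_nonneg zero_le_two _
  rw [haar_apply]
  split_ifs <;> simp [abs_of_nonneg h0] <;> omega

lemma haar_mul_self (n k : ℤ) (x : ℝ) :
    haar n k x * haar n k x = (2 ^ n)⁻¹ * (dyadic n k).indicator 1 x := by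
  have hsq : (2 : ℝ) ^ (-(n : ℝ) / 2) * 2 ^ (-(n : ℝ) / 2) = (2 ^ n)⁻¹ := by
    rw [← Real.rpow_add two_pos, add_halves, Real.rpow_neg zero_le_two, Real.rpow_intCast]
  rw [haar_apply, Set.indicator_apply, mem_dyadic_iff_floor, floor_div_two_zpow_eq_div_two n x,
    Pi.one_apply]
  split_ifs <;> first | omega | linear_combination hsq | simp

lemma haar_eq_haarVal (hn : n < N) (hx : x ∈ dyadic n k) : haar N K x = haarVal N K n k := by
  simp only [haarVal, haar, indicator_dyadic_eq_left (by omega : n ≤ N - 1) hx]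

lemma measurable_haar (n k : ℤ) : Measurable (haar n k) :=
  ((measurable_const.indicator (measurableSet_dyadic _ _)).sub
    (measurable_const.indicator (measurableSet_dyadic _ _))).const_mul _

lemma integrable_haar (n k : ℤ) : Integrable (haar n k) :=
  ((integrable_indicator_dyadic _ _).sub (integrable_indicator_dyadic _ _)).const_mul _

lemma integrable_haar_mul (N K n k : ℤ) : Integrable fun x => haar N K x * haar n k x :=
  (integrable_haar n k).bdd_mul (measurable_haar N K).aestronglyMeasurable
    (ae_of_all _ fun x => (Real.norm_eq_abs _).trans_le (abs_haar_le N K x))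

lemma integral_haar (n k : ℤ) : ∫ x, haar n k x = 0 := by
  simp only [haar]
  rw [integral_const_mul, integral_sub (integrable_indicator_dyadic _ _)
    (integrable_indicator_dyadic _ _), integral_indicator_one (measurableSet_dyadic _ _),
    integral_indicator_one (measurableSet_dyadic _ _), volume_real_dyadic, volume_real_dyadic,
    sub_self, mul_zero]

lemma integral_mul_haar_of_eqOn {g : ℝ → ℝ} {c : ℝ} (hg : ∀ x ∈ dyadic n k, g x = c) :
    ∫ x, g x * haar n k x = 0 := by
  have hgc : (fun x => g x * haar n k x) = fun x => c * haar n k x := funext fun x => by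
    by_cases hx : x ∈ dyadic n k
    · rw [hg x hx]
    · rw [haar_eq_zero_of_notMem hx, mul_zero, mul_zero]
  rw [hgc, integral_const_mul, integral_haar, mul_zero]

lemma innH_haar_self (n k : ℤ) : innH (haar n k) n k = 1 := by
  simp only [innH, haar_mul_self]
  rw [integral_const_mul, integral_indicator_one (measurableSet_dyadic _ _), volume_real_dyadic,
    inv_mul_cancel₀ (zpow_ne_zero n two_ne_zero)]

lemma innH_haar (N K n k : ℤ) : innH (haar N K) n k = if (N, K) = (n, k) then 1 else 0 := by
  split_ifs with h
  · obtain ⟨rfl, rfl⟩ := Prod.mk.inj h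
    exact innH_haar_self N K
  rcases lt_trichotomy n N with hlt | rfl | hgt
  · exact integral_mul_haar_of_eqOn fun x hx => haar_eq_haarVal hlt hx
  · have hK : K ≠ k := fun hK => h (hK ▸ rfl)
    exact integral_mul_haar_of_eqOn fun x hx =>
      haar_eq_zero_of_notMem (Set.disjoint_right.1 (disjoint_dyadic hK) hx)
  · simp only [innH, mul_comm (haar N K _)]
    exact integral_mul_haar_of_eqOn fun x hx => haar_eq_haarVal hgt hx

lemma avg_haar (N K n k : ℤ) : avg (haar N K) n k = if n < N then haarVal N K n k else 0 := by
  split_ifs with h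
  · rw [avg, setIntegral_congr_fun (measurableSet_dyadic n k) fun x hx => haar_eq_haarVal h hx,
      setIntegral_const, volume_real_dyadic, smul_eq_mul, ← mul_assoc, ← zpow_add₀ two_ne_zero,
      neg_add_cancel, zpow_zero, one_mul]
  · have hind : (dyadic n k).indicator (haar N K)
        = fun x => (dyadic n k).indicator 1 x * haar N K x :=
      funext fun x => by by_cases hx : x ∈ dyadic n k <;> simp [hx]
    rw [avg, ← integral_indicator (measurableSet_dyadic n k), hind,
      integral_mul_haar_of_eqOn fun x hx => indicator_dyadic_eq_left (not_lt.1 h) hx, mul_zero]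

end Haar

lemma hasSum_ite_lt_zpow {a : ℝ} (ha : 1 < a) (N : ℤ) :
    HasSum (fun n : ℤ => if n < N then a ^ n else 0) (a ^ N / (a - 1)) := by
  have ha0 : a ≠ 0 := by positivity
  have hinj : Function.Injective fun m : ℕ => N - 1 - (m : ℤ) := fun m m' h => by
    simp only at h
    omega
  rw [← hinj.hasSum_iff fun n hn => if_neg fun hlt => hn ⟨(N - 1 - n).toNat, by simp only; omega⟩]
  have hterm : (fun n : ℤ => if n < N then a ^ n else 0) ∘ (fun m : ℕ => N - 1 - (m : ℤ))
      = fun m => a ^ (N - 1) * a⁻¹ ^ m := funext fun m => by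
    rw [Function.comp_apply, if_pos (by omega), zpow_sub₀ ha0, zpow_natCast, inv_pow,
      div_eq_mul_inv]
  have hsum : a ^ (N - 1) * (1 - a⁻¹)⁻¹ = a ^ N / (a - 1) := by
    rw [zpow_sub_one₀ ha0]
    field_simp
  rw [hterm, ← hsum]
  exact (hasSum_geometric_of_lt_one (inv_nonneg.2 (by linarith))
    (inv_lt_one_of_one_lt₀ ha)).mul_left _

lemma hasSum_mul_indicator_dyadic_iff (g : ℤ × ℤ → ℝ) (x : ℝ) {a : ℝ} :
    HasSum (fun p : ℤ × ℤ => g p * (dyadic p.1 p.2).indicator 1 x) a ↔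
      HasSum (fun n : ℤ => g (n, ⌊x / 2 ^ n⌋)) a := by
  have hinj : Function.Injective fun n : ℤ => (n, ⌊x / 2 ^ n⌋) := fun n n' h => congrArg Prod.fst h
  have hoff : ∀ p ∉ Set.range fun n : ℤ => (n, ⌊x / 2 ^ n⌋),
      g p * (dyadic p.1 p.2).indicator 1 x = 0 := fun p hp => by
    rw [Set.indicator_of_notMem fun hx => hp ⟨p.1, Prod.ext rfl (mem_dyadic_iff_floor.1 hx)⟩,
      mul_zero]
  rw [← hinj.hasSum_iff hoff]
  congr! 1
  funext n
  rw [Function.comp_apply, Set.indicator_of_mem (mem_dyadic_iff_floor.2 rfl), Pi.one_apply, mul_one]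

lemma hasSum_Ts_haar {s : ℝ} (hs : 0 < s) (N K : ℤ) (x : ℝ) :
    HasSum (fun p : ℤ × ℤ =>
        (2 : ℝ) ^ ((p.1 : ℝ) * s) * avg (haar N K) p.1 p.2 * (dyadic p.1 p.2).indicator 1 x)
      ((2 : ℝ) ^ ((N : ℝ) * s) * haar N K x / (2 ^ s - 1)) := by
  have hpow : ∀ n : ℤ, (2 : ℝ) ^ ((n : ℝ) * s) = (2 ^ s) ^ n := fun n => by
    rw [mul_comm, Real.rpow_mul_intCast zero_le_two]
  have hterm : ∀ n : ℤ, (2 : ℝ) ^ ((n : ℝ) * s) * avg (haar N K) n ⌊x / 2 ^ n⌋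
      = (if n < N then (2 ^ s) ^ n else 0) * haar N K x := fun n => by
    rw [avg_haar, hpow]
    split_ifs with h
    · rw [haar_eq_haarVal h (mem_dyadic_iff_floor.2 rfl)]
    · simp
  rw [hasSum_mul_indicator_dyadic_iff
    (fun p => (2 : ℝ) ^ ((p.1 : ℝ) * s) * avg (haar N K) p.1 p.2), hpow, mul_div_right_comm]
  simp only [hterm]
  exact (hasSum_ite_lt_zpow (Real.one_lt_rpow one_lt_two hs) N).mul_right _

lemma hasSum_Ts_sum_haar {s : ℝ} (hs : 0 < s) (S : Finset (ℤ × ℤ)) (b : ℤ × ℤ → ℝ) (x : ℝ) :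
    HasSum (fun p : ℤ × ℤ => (2 : ℝ) ^ ((p.1 : ℝ) * s) *
        avg (fun y => ∑ q ∈ S, b q * haar q.1 q.2 y) p.1 p.2 * (dyadic p.1 p.2).indicator 1 x)
      (∑ q ∈ S, b q * ((2 : ℝ) ^ ((q.1 : ℝ) * s) * haar q.1 q.2 x / (2 ^ s - 1))) := by
  have havg : ∀ n k, avg (fun y => ∑ q ∈ S, b q * haar q.1 q.2 y) n k
      = ∑ q ∈ S, b q * avg (haar q.1 q.2) n k := fun n k => by
    rw [avg, integral_finsetSum _ fun q _ => (integrable_haar q.1 q.2).integrableOn.const_mul _,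
      Finset.mul_sum]
    simp only [avg, integral_const_mul, mul_left_comm]
  simp only [havg, Finset.mul_sum, Finset.sum_mul]
  refine hasSum_sum fun q _ => ?_
  simpa only [mul_assoc, mul_left_comm (b q)] using (hasSum_Ts_haar hs q.1 q.2 x).mul_left (b q)

lemma innH_sum_haar (c : ℤ × ℤ →₀ ℝ) (n k : ℤ) :
    innH (fun x => ∑ q ∈ c.support, c q * haar q.1 q.2 x) n k = c (n, k) := by
  simp only [innH, Finset.sum_mul, mul_assoc]
  rw [integral_finsetSum _ fun q _ => (integrable_haar_mul q.1 q.2 n k).const_mul _]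
  simp only [integral_const_mul]
  change ∑ q ∈ c.support, c q * innH (haar q.1 q.2) n k = c (n, k)
  simp only [innH_haar, Prod.mk.eta, mul_ite, mul_one, mul_zero, Finset.sum_ite_eq',
    Finsupp.mem_support_iff]
  exact ite_eq_left_iff.2 fun h => (not_not.1 h).symm

lemma Ds_sum_haar (s : ℝ) (c : ℤ × ℤ →₀ ℝ) :
    Ds s (fun x => ∑ q ∈ c.support, c q * haar q.1 q.2 x)
      = fun x => ∑ q ∈ c.support, (2 : ℝ) ^ (-(q.1 : ℝ) * s) * c q * haar q.1 q.2 x := by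
  funext x
  rw [Ds, tsum_eq_sum fun p hp => by
    rw [innH_sum_haar, Finsupp.notMem_support_iff.1 hp, mul_zero, zero_mul]]
  simp only [innH_sum_haar]

theorem dyadic_MS_general (s : ℝ) (hs0 : 0 < s) (f : ℝ → ℝ) (hf : f ∈ haarSpan) :
    ∀ᵐ x ∂(volume : Measure ℝ), f x = ((2 : ℝ) ^ s - 1) * Ts s (Ds s f) x := by
  obtain ⟨c, rfl⟩ := Finsupp.mem_span_range_iff_exists_finsupp.1 hf
  have hc : (c.sum fun q a => a • haar q.1 q.2)
      = fun x => ∑ q ∈ c.support, c q * haar q.1 q.2 x := by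
    ext x
    simp [Finsupp.sum]
  have h2s : (2 : ℝ) ^ s - 1 ≠ 0 := (sub_pos.2 (Real.one_lt_rpow one_lt_two hs0)).ne'
  refine ae_of_all _ fun x => ?_
  rw [hc, Ts, Ds_sum_haar, (hasSum_Ts_sum_haar hs0 _ _ x).tsum_eq, Finset.mul_sum]
  refine Finset.sum_congr rfl fun q _ => ?_
  rw [neg_mul, Real.rpow_neg zero_le_two]
  field_simp

theorem dyadic_MS (s : ℝ) (hs0 : 0 < s) (hs1 : s < 1) (f : ℝ → ℝ) (hf : f ∈ haarSpan) :
    ∀ᵐ x ∂(volume : Measure ℝ), f x = ((2 : ℝ) ^ s - 1) * Ts s (Ds s f) x :=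
  dyadic_MS_general s hs0 f hf
end

section
/- Let f = Σ_{k>0} 2^{-k/2} k^{-α/2} h_{I^{(k)}} with α > 1. Then for every n ≤ 0 (I^{(n)} the ancestors as before), (f², h_{I^{(n)}}) = 2^{n/2} ‖f‖²_{L²(ℝ)}. -/
open MeasureTheory Filter
open scoped ENNReal Classical Topology

/-- The counterexample at criticality: f = Σ_{k>0} 2^{-k/2} k^{-α/2} h_{I^(k)},
with I^(k) = dyadic (-k) (-1). -/
noncomputable def fCrit (α : ℝ) : ℝ → ℝ := fun x =>
  ∑' k : ℕ, (2 : ℝ) ^ (-((k : ℝ) + 1) / 2) * ((k : ℝ) + 1) ^ (-α / 2) *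
    haar (-((k : ℤ) + 1)) (-1) x

lemma zpow_le_half {m : ℤ} (hm : m ≤ -1) : (2:ℝ) ^ m ≤ 1/2 := by
  have : (2:ℝ) ^ m ≤ (2:ℝ) ^ (-1 : ℤ) := by
    apply zpow_le_zpow_right₀ (by norm_num) hm
  simpa using this

lemma fCrit_support {α : ℝ} {x : ℝ} (hx : x ∉ Set.Ico (-(1/2) : ℝ) 0) : fCrit α x = 0 := by
  unfold fCrit
  rw [show (0:ℝ) = ∑' (_ : ℕ), (0:ℝ) from (tsum_zero).symm]
  apply tsum_congr
  intro k
  have h1 : x ∉ dyadic (-(↑k + 1) - 1) (2 * (-1) + 1) := by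
    intro hmem
    apply hx
    unfold dyadic at hmem
    simp only [Set.mem_Ico] at hmem ⊢
    have hle : (2:ℝ) ^ (-(↑k + 1) - 1 : ℤ) ≤ 1/2 := zpow_le_half (by omega)
    push_cast at hmem
    constructor
    · nlinarith [hmem.1]
    · nlinarith [hmem.2]
  have h2 : x ∉ dyadic (-(↑k + 1) - 1) (2 * (-1)) := by
    intro hmem
    apply hx
    unfold dyadic at hmem
    simp only [Set.mem_Ico] at hmem ⊢
    have hle : (2:ℝ) ^ (-(↑k + 1) - 1 : ℤ) ≤ 1/4 := by
      have h := zpow_le_zpow_right₀ (show (1:ℝ) ≤ 2 by norm_num)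
        (show (-(↑k + 1) - 1 : ℤ) ≤ -2 by omega)
      have h4 : (2:ℝ) ^ (-2 : ℤ) = 1/4 := by norm_num
      linarith [h4 ▸ h]
    have hpos : (0:ℝ) < (2:ℝ) ^ (-(↑k + 1) - 1 : ℤ) := by positivity
    push_cast at hmem
    constructor
    · nlinarith [hmem.1]
    · nlinarith [hmem.2]
  unfold haar
  rw [Set.indicator_of_notMem h1, Set.indicator_of_notMem h2]
  ring

lemma haar_on_supp {n : ℤ} (hn : n ≤ 0) {x : ℝ} (hx : x ∈ Set.Ico (-(1/2) : ℝ) 0) :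
    haar (-n) (-1) x = (2:ℝ) ^ ((n:ℝ)/2) := by
  obtain ⟨hx1, hx2⟩ := hx
  have h1 : x ∈ dyadic (-n - 1) (2 * (-1) + 1) := by
    unfold dyadic
    simp only [Set.mem_Ico]
    have hle : (1:ℝ)/2 ≤ (2:ℝ) ^ (-n - 1 : ℤ) := by
      have : (2:ℝ) ^ (-1 : ℤ) ≤ (2:ℝ) ^ (-n - 1 : ℤ) :=
        zpow_le_zpow_right₀ (by norm_num) (by omega)
      simpa using this
    push_cast
    constructor <;> nlinarith
  have h2 : x ∉ dyadic (-n - 1) (2 * (-1)) := by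
    intro hmem
    unfold dyadic at hmem
    simp only [Set.mem_Ico] at hmem
    have hle : (1:ℝ)/2 ≤ (2:ℝ) ^ (-n - 1 : ℤ) := by
      have : (2:ℝ) ^ (-1 : ℤ) ≤ (2:ℝ) ^ (-n - 1 : ℤ) :=
        zpow_le_zpow_right₀ (by norm_num) (by omega)
      simpa using this
    push_cast at hmem
    nlinarith [hmem.2]
  unfold haar
  rw [Set.indicator_of_mem h1, Set.indicator_of_notMem h2]
  push_cast
  rw [show (-(-(n:ℝ)) / 2) = (n:ℝ)/2 by ring]
  simp

theorem haar_coeff_fCrit_sq_neg (α : ℝ) (h1 : 1 < α) (n : ℤ) (hn : n ≤ 0) :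
    innH (fun x => fCrit α x ^ 2) (-n) (-1) =
      (2 : ℝ) ^ ((n : ℝ) / 2) * ∫ x, fCrit α x ^ 2 := by
  unfold innH
  rw [← MeasureTheory.integral_const_mul]
  congr 1
  ext x
  by_cases hx : x ∈ Set.Ico (-(1/2) : ℝ) 0
  · rw [haar_on_supp hn hx]; ring
  · simp [fCrit_support hx]
end
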